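/- arXiv:2405.20311 — 5 statements merged into one kernel-verified Lean document; each statement's English description precedes it below -/
import Mathlib

section
/- Let m be a positive integer. Given squarefree positive integers a, b, c, d with abcd = m², there exist unique squarefree positive integers g_1, ..., g_6 which are pairwise coprime except possibly for the pair (g_1, g_2), such that a = g_1 g_3 g_4, b = g_1 g_5 g_6, c = g_2 g_3 g_5, d = g_2 g_4 g_6, and abcd = (g_1 g_2 g_3 g_4 g_5 g_6)². Conversely, any squarefree g_1, ..., g_6 pairwise coprime except possibly for (g_1, g_2) with ∏_{i=1}^6 g_i = m yield, via the same formulas, squarefree a, b, c, d with abcd = m². -/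
/-!
A squarefree number is the set of its primes, and `a b c d` is a square exactly when every prime
divides an even number (0, 2 or 4) of `a, b, c, d`. A prime dividing exactly two of them belongs to
the `gᵢ` attached to that pair, a prime dividing all four to both `g₁` and `g₂`. Hence the tuple is
read off by gcds: `g₁ = (a, b)`, `g₂ = (c, d)`, and with `e = (g₁, g₂)` the remaining ones are
`(a, c)/e, (a, d)/e, (b, c)/e, (b, d)/e`. For a good tuple this is pure gcd algebra (which gives
uniqueness); that these gcds multiply back to `a, b, c, d` is checked prime by prime.
-/

/-- Pairwise coprime except possibly the pair `(g₁, g₂)`, plus squarefreeness. -/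
def GoodTuple (g : ℕ × ℕ × ℕ × ℕ × ℕ × ℕ) : Prop :=
  match g with
  | (g1, g2, g3, g4, g5, g6) =>
    Squarefree g1 ∧ Squarefree g2 ∧ Squarefree g3 ∧ Squarefree g4 ∧
    Squarefree g5 ∧ Squarefree g6 ∧
    Nat.Coprime g1 g3 ∧ Nat.Coprime g1 g4 ∧ Nat.Coprime g1 g5 ∧ Nat.Coprime g1 g6 ∧
    Nat.Coprime g2 g3 ∧ Nat.Coprime g2 g4 ∧ Nat.Coprime g2 g5 ∧ Nat.Coprime g2 g6 ∧
    Nat.Coprime g3 g4 ∧ Nat.Coprime g3 g5 ∧ Nat.Coprime g3 g6 ∧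
    Nat.Coprime g4 g5 ∧ Nat.Coprime g4 g6 ∧ Nat.Coprime g5 g6

open Nat (Coprime)

def tupleProducts (g : ℕ × ℕ × ℕ × ℕ × ℕ × ℕ) : ℕ × ℕ × ℕ × ℕ :=
  (g.1 * g.2.2.1 * g.2.2.2.1, g.1 * g.2.2.2.2.1 * g.2.2.2.2.2,
    g.2.1 * g.2.2.1 * g.2.2.2.2.1, g.2.1 * g.2.2.2.1 * g.2.2.2.2.2)

def gcdTuple (q : ℕ × ℕ × ℕ × ℕ) : ℕ × ℕ × ℕ × ℕ × ℕ × ℕ :=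
  match q with
  | (a, b, c, d) =>
    let e := Nat.gcd (Nat.gcd a b) (Nat.gcd c d)
    (Nat.gcd a b, Nat.gcd c d,
      Nat.gcd a c / e, Nat.gcd a d / e, Nat.gcd b c / e, Nat.gcd b d / e)

theorem Nat.squarefree_mul_mul_iff {x y z : ℕ} :
    Squarefree (x * y * z) ↔
      Squarefree x ∧ Squarefree y ∧ Squarefree z ∧ Coprime x y ∧ Coprime x z ∧ Coprime y z := by
  simp only [Nat.squarefree_mul_iff, Nat.coprime_mul_iff_left]
  tauto

theorem goodTuple_iff {g1 g2 g3 g4 g5 g6 : ℕ} :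
    GoodTuple (g1, g2, g3, g4, g5, g6) ↔
      Squarefree (g1 * g3 * g4) ∧ Squarefree (g1 * g5 * g6) ∧ Squarefree (g2 * g3 * g5) ∧
        Squarefree (g2 * g4 * g6) ∧ Coprime g3 g6 ∧ Coprime g4 g5 := by
  simp only [GoodTuple, Nat.squarefree_mul_mul_iff]
  tauto

theorem Nat.Coprime.of_dvd_of_dvd_gcd {x y a b : ℕ} (hx : x ∣ a) (hy : y ∣ b)
    (h : Coprime x (Nat.gcd a b)) : Coprime x y :=
  Nat.eq_one_of_dvd_one <| h.gcd_eq_one ▸ Nat.dvd_gcd (Nat.gcd_dvd_left x y)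
    (Nat.dvd_gcd ((Nat.gcd_dvd_left x y).trans hx) ((Nat.gcd_dvd_right x y).trans hy))

theorem goodTuple_of_squarefree {g1 g2 g3 g4 g5 g6 : ℕ} (ha : Squarefree (g1 * g3 * g4))
    (hb : Squarefree (g1 * g5 * g6)) (hc : Squarefree (g2 * g3 * g5))
    (hd : Squarefree (g2 * g4 * g6)) (h1 : Nat.gcd (g1 * g3 * g4) (g1 * g5 * g6) = g1) :
    GoodTuple (g1, g2, g3, g4, g5, g6) := by
  obtain ⟨-, -, -, c13, c14, -⟩ := Nat.squarefree_mul_mul_iff.mp ha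
  have hg3 : g3 ∣ g1 * g3 * g4 := (dvd_mul_left g3 g1).mul_right g4
  have hg4 : g4 ∣ g1 * g3 * g4 := dvd_mul_left g4 _
  have hg5 : g5 ∣ g1 * g5 * g6 := (dvd_mul_left g5 g1).mul_right g6
  have hg6 : g6 ∣ g1 * g5 * g6 := dvd_mul_left g6 _
  refine goodTuple_iff.mpr ⟨ha, hb, hc, hd, ?_, ?_⟩
  · exact Nat.Coprime.of_dvd_of_dvd_gcd hg3 hg6 (by rw [h1]; exact c13.symm)
  · exact Nat.Coprime.of_dvd_of_dvd_gcd hg4 hg5 (by rw [h1]; exact c14.symm)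

theorem Nat.gcd_mul_mul_eq_mul_gcd {x y z u v : ℕ} (huy : Coprime u y) (huv : Coprime u v)
    (hvx : Coprime v x) : Nat.gcd (x * z * u) (y * z * v) = z * Nat.gcd x y := by
  rw [mul_right_comm x, mul_right_comm y, mul_comm _ z, mul_comm _ z,
    Nat.gcd_mul_left, Coprime.gcd_mul_right_cancel x (huy.mul_right huv),
    Coprime.gcd_mul_right_cancel_right y hvx]

theorem gcdTuple_tupleProducts {g : ℕ × ℕ × ℕ × ℕ × ℕ × ℕ} (hg : GoodTuple g) :
    gcdTuple (tupleProducts g) = g := by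
  obtain ⟨g1, g2, g3, g4, g5, g6⟩ := g
  obtain ⟨s1, -, -, -, -, -, c13, c14, c15, c16, c23, c24, c25, c26, c34, c35, c36, c45, c46, c56⟩ :=
    hg
  have h1 : Nat.gcd (g1 * g3 * g4) (g1 * g5 * g6) = g1 := by
    rw [mul_assoc, mul_assoc, Nat.gcd_mul_left,
      Coprime.gcd_eq_one ((c35.mul_right c36).mul_left (c45.mul_right c46)), mul_one]
  have h2 : Nat.gcd (g2 * g3 * g5) (g2 * g4 * g6) = g2 := by
    rw [mul_assoc, mul_assoc, Nat.gcd_mul_left,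
      Coprime.gcd_eq_one ((c34.mul_right c36).mul_left (c45.symm.mul_right c56)), mul_one]
  have h3 : Nat.gcd (g1 * g3 * g4) (g2 * g3 * g5) = g3 * Nat.gcd g1 g2 :=
    Nat.gcd_mul_mul_eq_mul_gcd c24.symm c45 c15.symm
  have h4 : Nat.gcd (g1 * g3 * g4) (g2 * g4 * g6) = g4 * Nat.gcd g1 g2 := by
    rw [mul_right_comm g1]; exact Nat.gcd_mul_mul_eq_mul_gcd c23.symm c36 c16.symm
  have h5 : Nat.gcd (g1 * g5 * g6) (g2 * g3 * g5) = g5 * Nat.gcd g1 g2 := by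
    rw [mul_right_comm g2]; exact Nat.gcd_mul_mul_eq_mul_gcd c26.symm c36.symm c13.symm
  have h6 : Nat.gcd (g1 * g5 * g6) (g2 * g4 * g6) = g6 * Nat.gcd g1 g2 := by
    rw [mul_right_comm g1, mul_right_comm g2]
    exact Nat.gcd_mul_mul_eq_mul_gcd c25.symm c45.symm c14.symm
  have he : 0 < Nat.gcd g1 g2 := Nat.gcd_pos_of_pos_left _ (Nat.pos_of_ne_zero s1.ne_zero)
  simp only [gcdTuple, tupleProducts, h1, h2, h3, h4, h5, h6, Nat.mul_div_cancel _ he]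

theorem tupleProducts_injOn : Set.InjOn tupleProducts {g | GoodTuple g} := fun g hg g' hg' h => by
  rw [← gcdTuple_tupleProducts hg, h, gcdTuple_tupleProducts hg']

theorem gcd_mul_gcd_div_mul_gcd_div_eq {a b c d m : ℕ} (ha : Squarefree a) (hb : Squarefree b)
    (hc : Squarefree c) (hd : Squarefree d) (h : a * b * c * d = m ^ 2) :
    Nat.gcd a b * (Nat.gcd a c / Nat.gcd (Nat.gcd a b) (Nat.gcd c d)) *
      (Nat.gcd a d / Nat.gcd (Nat.gcd a b) (Nat.gcd c d)) = a := by
  set e := Nat.gcd (Nat.gcd a b) (Nat.gcd c d)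
  have ha0 := ha.ne_zero
  have hb0 := hb.ne_zero
  have hc0 := hc.ne_zero
  have hd0 := hd.ne_zero
  have he_ac : e ∣ Nat.gcd a c := Nat.dvd_gcd
    ((Nat.gcd_dvd_left _ _).trans (Nat.gcd_dvd_left a b))
    ((Nat.gcd_dvd_right _ _).trans (Nat.gcd_dvd_left c d))
  have he_ad : e ∣ Nat.gcd a d := Nat.dvd_gcd
    ((Nat.gcd_dvd_left _ _).trans (Nat.gcd_dvd_left a b))
    ((Nat.gcd_dvd_right _ _).trans (Nat.gcd_dvd_right c d))
  have hdiv0 {n : ℕ} (hn : n ≠ 0) (hen : e ∣ n) : n / e ≠ 0 :=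
    (Nat.div_pos (Nat.le_of_dvd (Nat.pos_of_ne_zero hn) hen)
      (Nat.gcd_pos_of_pos_left _ (Nat.gcd_pos_of_pos_left _ (Nat.pos_of_ne_zero ha0)))).ne'
  have h10 : Nat.gcd a b ≠ 0 := Nat.gcd_ne_zero_left ha0
  have h30 := hdiv0 (Nat.gcd_ne_zero_left ha0) he_ac
  have h40 := hdiv0 (Nat.gcd_ne_zero_left ha0) he_ad
  refine Nat.eq_of_factorization_eq (mul_ne_zero (mul_ne_zero h10 h30) h40) ha0 fun p => ?_
  -- at each prime the exponents of `a, b, c, d` are `0` or `1` with even sum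
  have hsq := congrArg (·.factorization p) h
  simp only [Nat.factorization_mul, Nat.factorization_pow, ha0, hb0, hc0, hd0, ne_eq,
    mul_eq_zero, or_self, not_false_eq_true, Finsupp.add_apply, Finsupp.smul_apply,
    smul_eq_mul] at hsq
  rw [Nat.factorization_mul (mul_ne_zero h10 h30) h40, Nat.factorization_mul h10 h30,
    Nat.factorization_div he_ac, Nat.factorization_div he_ad]
  simp only [e, Nat.factorization_gcd, ha0, hb0, hc0, hd0, h10, Nat.gcd_ne_zero_left, ne_eq,
    not_false_eq_true, Finsupp.add_apply, Finsupp.tsub_apply, Finsupp.inf_apply]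
  have := ha.natFactorization_le_one p
  have := hb.natFactorization_le_one p
  have := hc.natFactorization_le_one p
  have := hd.natFactorization_le_one p
  omega

theorem tupleProducts_gcdTuple {a b c d m : ℕ} (ha : Squarefree a) (hb : Squarefree b)
    (hc : Squarefree c) (hd : Squarefree d) (h : a * b * c * d = m ^ 2) :
    tupleProducts (gcdTuple (a, b, c, d)) = (a, b, c, d) := by
  have hA := gcd_mul_gcd_div_mul_gcd_div_eq ha hb hc hd h
  have hB := gcd_mul_gcd_div_mul_gcd_div_eq hb ha hc hd (by rw [← h]; ring)
  have hC := gcd_mul_gcd_div_mul_gcd_div_eq hc hd ha hb (by rw [← h]; ring)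
  have hD := gcd_mul_gcd_div_mul_gcd_div_eq hd hc ha hb (by rw [← h]; ring)
  rw [Nat.gcd_comm b a] at hB
  rw [Nat.gcd_comm c a, Nat.gcd_comm c b, Nat.gcd_comm (Nat.gcd c d)] at hC
  rw [Nat.gcd_comm d c, Nat.gcd_comm d a, Nat.gcd_comm d b, Nat.gcd_comm (Nat.gcd c d)] at hD
  simp only [tupleProducts, gcdTuple, hA, hB, hC, hD]

theorem goodTuple_gcdTuple {a b c d m : ℕ} (ha : Squarefree a) (hb : Squarefree b)
    (hc : Squarefree c) (hd : Squarefree d) (h : a * b * c * d = m ^ 2) :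
    GoodTuple (gcdTuple (a, b, c, d)) := by
  have hprod := tupleProducts_gcdTuple ha hb hc hd h
  simp only [tupleProducts, gcdTuple, Prod.mk.injEq] at hprod
  obtain ⟨hA, hB, hC, hD⟩ := hprod
  refine goodTuple_of_squarefree ?_ ?_ ?_ ?_ ?_
  · rwa [hA]
  · rwa [hB]
  · rwa [hC]
  · rwa [hD]
  · rw [hA, hB]

/-- **Parametrization of squarefree solutions of `a b c d = m²`.**
Given squarefree `a, b, c, d` with `a * b * c * d = m ^ 2`, there exist unique squarefree
`g₁, …, g₆`, pairwise coprime except possibly for `(g₁, g₂)`, with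
`a = g₁ g₃ g₄`, `b = g₁ g₅ g₆`, `c = g₂ g₃ g₅`, `d = g₂ g₄ g₆` and
`a b c d = (g₁ ⋯ g₆)²`. Conversely, any such tuple with `g₁ ⋯ g₆ = m` yields squarefree
`a, b, c, d` with `a b c d = m²` via the same formulas. -/
theorem squarefree_square_product_parametrization :
    (∀ m a b c d : ℕ, 0 < m →
      Squarefree a → Squarefree b → Squarefree c → Squarefree d →
      a * b * c * d = m ^ 2 →
      ∃! g : ℕ × ℕ × ℕ × ℕ × ℕ × ℕ, GoodTuple g ∧
        a = g.1 * g.2.2.1 * g.2.2.2.1 ∧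
        b = g.1 * g.2.2.2.2.1 * g.2.2.2.2.2 ∧
        c = g.2.1 * g.2.2.1 * g.2.2.2.2.1 ∧
        d = g.2.1 * g.2.2.2.1 * g.2.2.2.2.2 ∧
        a * b * c * d =
          (g.1 * g.2.1 * g.2.2.1 * g.2.2.2.1 * g.2.2.2.2.1 * g.2.2.2.2.2) ^ 2) ∧
    (∀ m : ℕ, ∀ g : ℕ × ℕ × ℕ × ℕ × ℕ × ℕ, GoodTuple g →
      g.1 * g.2.1 * g.2.2.1 * g.2.2.2.1 * g.2.2.2.2.1 * g.2.2.2.2.2 = m →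
      Squarefree (g.1 * g.2.2.1 * g.2.2.2.1) ∧
      Squarefree (g.1 * g.2.2.2.2.1 * g.2.2.2.2.2) ∧
      Squarefree (g.2.1 * g.2.2.1 * g.2.2.2.2.1) ∧
      Squarefree (g.2.1 * g.2.2.2.1 * g.2.2.2.2.2) ∧
      (g.1 * g.2.2.1 * g.2.2.2.1) * (g.1 * g.2.2.2.2.1 * g.2.2.2.2.2) *
        (g.2.1 * g.2.2.1 * g.2.2.2.2.1) * (g.2.1 * g.2.2.2.1 * g.2.2.2.2.2) = m ^ 2) := by
  refine ⟨fun m a b c d _ ha hb hc hd h => ?_, fun m g hg hm => ?_⟩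
  · have hgood := goodTuple_gcdTuple ha hb hc hd h
    have hprod := tupleProducts_gcdTuple ha hb hc hd h
    generalize gcdTuple (a, b, c, d) = g at hgood hprod
    refine ⟨g, ?_, fun g' ⟨hg', hprod'⟩ => tupleProducts_injOn hg' hgood ?_⟩
    · simp only [tupleProducts, Prod.mk.injEq] at hprod
      obtain ⟨hA, hB, hC, hD⟩ := hprod
      exact ⟨hgood, hA.symm, hB.symm, hC.symm, hD.symm, by rw [← hA, ← hB, ← hC, ← hD]; ring⟩
    · obtain ⟨hA, hB, hC, hD, -⟩ := hprod'
      rw [hprod, tupleProducts, ← hA, ← hB, ← hC, ← hD]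
  · obtain ⟨g1, g2, g3, g4, g5, g6⟩ := g
    obtain ⟨ha, hb, hc, hd, -, -⟩ := goodTuple_iff.mp hg
    exact ⟨ha, hb, hc, hd, by rw [← hm]; ring⟩
end

section
/- Fix θ ∈ ℂ and let g : ℕ → ℂ satisfy ∑_{p ≤ t} g(p) = θ t/log t + E_g(t) with E_g(t) = o(t/log t) and ∫_2^∞ |E_g(t)| t^{-2} dt < ∞. Then for s in any compact subset of ℝ \ {0}, ∑_{p > y} g(p) cos(s log p) p^{-(1 + 1/log y)} → 0 as y → ∞, uniformly on the compact set. -/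
/-!
Put `σ = 1 + 1 / log y` and `w = -σ + i s`. Since `cos (s log p) p ^ (-σ) = (p ^ w + p ^ w̄) / 2`,
it is enough to bound the tails `∑_{p > y} g(p) p ^ w` uniformly in `s`. Partial summation writes
such a tail as `-y ^ w π_g(y) - ∫_y^∞ w t ^ (w - 1) π_g(t) dt`. The error term `E_g` contributes at
most `|E_g(y)| / y + |w| ∫_y^∞ |E_g(t)| t⁻² dt`. For the main term `θ t / log t`, integrating
`t ^ w / log t` by parts against `t ^ (w + 1) / log t` gains a factor `1 / (w + 1)`, so it
contributes `O(|θ| (1 + |w|) / (|w + 1| log y))`; this is where `|w + 1| ≥ |s| ≥ δ > 0` is used.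
All three bounds tend to `0` as `y → ∞`, uniformly for `δ ≤ |s| ≤ R`.
-/

open Filter MeasureTheory

/-- `π_g(t) = ∑_{p ≤ t} g(p)`, the sum over primes up to the real number `t`. -/
noncomputable def primeSum (g : ℕ → ℂ) (t : ℝ) : ℂ :=
  ∑ p ∈ Nat.primesBelow (⌊t⌋₊ + 1), g p

open Set Topology
open scoped ComplexConjugate

/-- `∑_{k > a} k ^ w c_k`, written by partial summation in terms of `A t = ∑_{k ≤ t} c_k`. -/
noncomputable def partialSummationTail (w : ℂ) (a : ℝ) (A : ℝ → ℂ) : ℂ :=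
  -((a : ℂ) ^ w * A a) - ∫ t in Ioi a, w * (t : ℂ) ^ (w - 1) * A t

lemma norm_ofReal_cpow_le_rpow {t r : ℝ} {w : ℂ} (ht : 1 ≤ t) (hw : w.re ≤ r) :
    ‖(t : ℂ) ^ w‖ ≤ t ^ r := by
  rw [Complex.norm_cpow_eq_rpow_re_of_pos (by linarith)]
  exact Real.rpow_le_rpow_of_exponent_le ht hw

lemma integrableOn_mul_cpow_sub_one_mul_of_le_mul {A : ℝ → ℂ} {w : ℂ} {a C : ℝ}
    (hw : w.re < -1) (ha : 0 < a) (hA : AEStronglyMeasurable A (volume.restrict (Ioi a)))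
    (hAC : ∀ t ∈ Ioi a, ‖A t‖ ≤ C * t) :
    IntegrableOn (fun t : ℝ => w * (t : ℂ) ^ (w - 1) * A t) (Ioi a) := by
  refine Integrable.mono' ((integrableOn_Ioi_rpow_of_lt hw ha).const_mul (‖w‖ * C))
    ((Measurable.aestronglyMeasurable (by fun_prop)).mul hA) ?_
  refine (ae_restrict_iff' measurableSet_Ioi).mpr (.of_forall fun t (ht : a < t) => ?_)
  have ht0 : 0 < t := ha.trans ht
  rw [norm_mul, norm_mul, Complex.norm_cpow_eq_rpow_re_of_pos ht0, Complex.sub_re,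
    Complex.one_re, Real.rpow_sub_one ht0.ne']
  calc ‖w‖ * (t ^ w.re / t) * ‖A t‖ ≤ ‖w‖ * (t ^ w.re / t) * (C * t) := by
        gcongr; exact hAC t ht
    _ = ‖w‖ * C * t ^ w.re := by field_simp

lemma tendsto_cpow_mul_of_norm_le_mul {A : ℝ → ℂ} {w : ℂ} {a C : ℝ} (hw : w.re < -1)
    (ha : 0 < a) (hA : ∀ t, a ≤ t → ‖A t‖ ≤ C * t) :
    Tendsto (fun t : ℝ => (t : ℂ) ^ w * A t) atTop (𝓝 0) := by
  have hlim : Tendsto (fun t : ℝ => C * t ^ (w.re + 1)) atTop (𝓝 0) := by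
    simpa using (tendsto_rpow_neg_atTop (by linarith : 0 < -(w.re + 1))).const_mul C
  refine squeeze_zero_norm' ?_ hlim
  filter_upwards [eventually_ge_atTop a] with t ht
  have ht0 : 0 < t := ha.trans_le ht
  rw [norm_mul, Complex.norm_cpow_eq_rpow_re_of_pos ht0, Real.rpow_add_one ht0.ne']
  calc t ^ w.re * ‖A t‖ ≤ t ^ w.re * (C * t) := by gcongr; exact hA t ht
    _ = C * (t ^ w.re * t) := by ring

theorem tendsto_sum_Ioc_cpow_mul (c : ℕ → ℂ) {w : ℂ} {a C : ℝ} (hw : w.re < -1) (ha : 0 < a)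
    (hA : ∀ t, a ≤ t → ‖∑ k ∈ Finset.Icc 0 ⌊t⌋₊, c k‖ ≤ C * t) :
    Tendsto (fun N : ℕ => ∑ k ∈ Finset.Ioc ⌊a⌋₊ N, (k : ℂ) ^ w * c k) atTop
      (𝓝 (partialSummationTail w a fun t => ∑ k ∈ Finset.Icc 0 ⌊t⌋₊, c k)) := by
  set A : ℝ → ℂ := fun t => ∑ k ∈ Finset.Icc 0 ⌊t⌋₊, c k
  have hw0 : w ≠ 0 := by rintro rfl; norm_num at hw
  have hderiv : ∀ t : ℝ, 0 < t → deriv (fun t : ℝ => (t : ℂ) ^ w) t = w * (t : ℂ) ^ (w - 1) :=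
    fun t ht => Complex.deriv_ofReal_cpow_const ht.ne' hw0
  have hint : IntegrableOn (fun t : ℝ => w * (t : ℂ) ^ (w - 1) * A t) (Ioi a) :=
    integrableOn_mul_cpow_sub_one_mul_of_le_mul hw ha (by fun_prop) fun t ht => hA t (le_of_lt ht)
  have habel : ∀ᶠ N : ℕ in atTop, ((N : ℝ) : ℂ) ^ w * A N - (a : ℂ) ^ w * A a -
      ∫ t in Ioc a N, w * (t : ℂ) ^ (w - 1) * A t =
      ∑ k ∈ Finset.Ioc ⌊a⌋₊ N, (k : ℂ) ^ w * c k := by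
    filter_upwards [eventually_ge_atTop ⌈a⌉₊] with N hN
    have haN : a ≤ N := Nat.ceil_le.mp hN
    have key := sum_mul_eq_sub_sub_integral_mul c ha.le haN
      (fun t ht => (hasDerivAt_ofReal_cpow_const (ha.trans_le ht.1).ne' hw0).differentiableAt)
      ((integrableOn_Ioi_deriv_ofReal_cpow (half_pos ha) (by linarith)).mono_set
        fun t ht => half_lt_self ha |>.trans_le ht.1)
    simp only [Nat.floor_natCast, Complex.ofReal_natCast] at key ⊢
    have hIoc : ∫ t in Ioc a N, deriv (fun t : ℝ => (t : ℂ) ^ w) t * A t =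
        ∫ t in Ioc a N, w * (t : ℂ) ^ (w - 1) * A t :=
      setIntegral_congr_fun measurableSet_Ioc fun t ht => by rw [hderiv t (ha.trans ht.1)]
    rw [key, ← hIoc]
    simp [A]
  have hboundary := (tendsto_cpow_mul_of_norm_le_mul hw ha hA).comp tendsto_natCast_atTop_atTop
  have hintegral : Tendsto (fun N : ℕ => ∫ t in Ioc a N, w * (t : ℂ) ^ (w - 1) * A t) atTop
      (𝓝 (∫ t in Ioi a, w * (t : ℂ) ^ (w - 1) * A t)) := by
    refine (intervalIntegral_tendsto_integral_Ioi a hint tendsto_natCast_atTop_atTop).congr' ?_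
    filter_upwards [eventually_ge_atTop ⌈a⌉₊] with N hN
    exact intervalIntegral.integral_of_le (Nat.ceil_le.mp hN)
  refine Tendsto.congr' habel ?_
  rw [partialSummationTail, ← zero_sub]
  exact (hboundary.sub_const _).sub hintegral

lemma norm_mul_cpow_sub_one_mul_le {w z : ℂ} {t : ℝ} (hw : w.re ≤ -1) (ht : 1 ≤ t) :
    ‖w * (t : ℂ) ^ (w - 1) * z‖ ≤ ‖w‖ * (‖z‖ / t ^ 2) := by
  have hpow : ‖(t : ℂ) ^ (w - 1)‖ ≤ (t ^ 2)⁻¹ := by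
    refine (norm_ofReal_cpow_le_rpow ht (r := -2) (by simp; linarith)).trans_eq ?_
    rw [Real.rpow_neg (by linarith), Real.rpow_two]
  rw [norm_mul, norm_mul, div_eq_inv_mul, ← mul_assoc]
  gcongr

lemma integrableOn_mul_cpow_sub_one_mul_of_div_sq {E : ℝ → ℂ} {w : ℂ} {a : ℝ} (hw : w.re ≤ -1)
    (ha : 1 ≤ a) (hE : AEStronglyMeasurable E (volume.restrict (Ioi a)))
    (hEint : IntegrableOn (fun t => ‖E t‖ / t ^ 2) (Ioi a)) :
    IntegrableOn (fun t : ℝ => w * (t : ℂ) ^ (w - 1) * E t) (Ioi a) := by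
  refine Integrable.mono' (hEint.const_mul ‖w‖)
    ((Measurable.aestronglyMeasurable (by fun_prop)).mul hE) ?_
  exact (ae_restrict_iff' measurableSet_Ioi).mpr (.of_forall fun t (ht : a < t) =>
    norm_mul_cpow_sub_one_mul_le hw (ha.trans ht.le))

lemma norm_partialSummationTail_le {E : ℝ → ℂ} {w : ℂ} {a : ℝ} (hw : w.re ≤ -1) (ha : 1 ≤ a)
    (hEint : IntegrableOn (fun t => ‖E t‖ / t ^ 2) (Ioi a)) :
    ‖partialSummationTail w a E‖ ≤ ‖E a‖ / a + ‖w‖ * ∫ t in Ioi a, ‖E t‖ / t ^ 2 := by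
  have hboundary : ‖(a : ℂ) ^ w * E a‖ ≤ ‖E a‖ / a := by
    rw [norm_mul, div_eq_inv_mul, ← Real.rpow_neg_one]
    gcongr
    exact norm_ofReal_cpow_le_rpow ha hw
  have hintegral : ‖∫ t in Ioi a, w * (t : ℂ) ^ (w - 1) * E t‖ ≤
      ∫ t in Ioi a, ‖w‖ * (‖E t‖ / t ^ 2) :=
    norm_integral_le_of_norm_le (hEint.const_mul ‖w‖) <|
      (ae_restrict_iff' measurableSet_Ioi).mpr (.of_forall fun t (ht : a < t) =>
        norm_mul_cpow_sub_one_mul_le hw (ha.trans ht.le))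
  rw [integral_const_mul] at hintegral
  calc ‖partialSummationTail w a E‖
      ≤ ‖(a : ℂ) ^ w * E a‖ + ‖∫ t in Ioi a, w * (t : ℂ) ^ (w - 1) * E t‖ := by
        rw [partialSummationTail, ← norm_neg ((a : ℂ) ^ w * E a)]
        exact norm_sub_le _ _
    _ ≤ _ := add_le_add hboundary hintegral

lemma partialSummationTail_add_mul {E h : ℝ → ℂ} {w θ : ℂ} {a : ℝ}
    (hE : IntegrableOn (fun t : ℝ => w * (t : ℂ) ^ (w - 1) * E t) (Ioi a))
    (hh : IntegrableOn (fun t : ℝ => w * (t : ℂ) ^ (w - 1) * h t) (Ioi a)) :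
    partialSummationTail w a (fun t => E t + θ * h t) =
      partialSummationTail w a E + θ * partialSummationTail w a h := by
  have hsplit : ∫ t in Ioi a, w * (t : ℂ) ^ (w - 1) * (E t + θ * h t) =
      (∫ t in Ioi a, w * (t : ℂ) ^ (w - 1) * E t) +
        θ * ∫ t in Ioi a, w * (t : ℂ) ^ (w - 1) * h t := by
    rw [← integral_const_mul, ← integral_add hE (hh.const_mul θ)]
    congr 1 with t
    ring
  simp only [partialSummationTail, hsplit]
  ring

section DivLog

variable {w : ℂ} {a : ℝ}

lemma hasDerivAt_cpow_add_one_div_log {t : ℝ} (hw : w + 1 ≠ 0) (ht : 1 < t) :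
    HasDerivAt (fun t : ℝ => (t : ℂ) ^ (w + 1) / Real.log t)
      ((w + 1) * ((t : ℂ) ^ w / Real.log t) - (t : ℂ) ^ w / Real.log t ^ 2) t := by
  have ht0 : (t : ℂ) ≠ 0 := by exact_mod_cast (zero_lt_one.trans ht).ne'
  have hlog : (Real.log t : ℂ) ≠ 0 := by exact_mod_cast (Real.log_pos ht).ne'
  refine ((hasDerivAt_ofReal_cpow_const (zero_lt_one.trans ht).ne' hw).div
    (Real.hasDerivAt_log (zero_lt_one.trans ht).ne').ofReal_comp hlog).congr_deriv ?_
  rw [add_sub_cancel_right, Complex.cpow_add _ _ ht0, Complex.cpow_one]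
  push_cast
  field_simp

lemma add_one_ne_zero_of_re_lt (hw : w.re < -1) : w + 1 ≠ 0 := fun h => by
  have := congrArg Complex.re h
  simp at this
  linarith

lemma integrableOn_cpow_div_log (hw : w.re < -1) (ha : 1 < a) :
    IntegrableOn (fun t : ℝ => (t : ℂ) ^ w / Real.log t) (Ioi a) := by
  refine Integrable.mono' ((integrableOn_Ioi_rpow_of_lt hw (by linarith)).div_const (Real.log a))
    (Measurable.aestronglyMeasurable (by fun_prop)) ?_
  refine (ae_restrict_iff' measurableSet_Ioi).mpr (.of_forall fun t (ht : a < t) => ?_)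
  have hlog : 0 < Real.log a := Real.log_pos ha
  rw [norm_div, Complex.norm_cpow_eq_rpow_re_of_pos (by linarith), Complex.norm_real,
    Real.norm_of_nonneg (Real.log_nonneg (by linarith))]
  exact div_le_div_of_nonneg_left (Real.rpow_nonneg (by linarith) _) hlog
    (Real.log_le_log (by linarith) ht.le)

lemma norm_cpow_div_log_sq_le {t : ℝ} (hw : w.re ≤ -1) (ht : 1 < t) :
    ‖(t : ℂ) ^ w / Real.log t ^ 2‖ ≤ t⁻¹ / Real.log t ^ 2 := by
  rw [norm_div, norm_pow, Complex.norm_real, Real.norm_of_nonneg (Real.log_nonneg ht.le),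
    ← Real.rpow_neg_one]
  gcongr
  exact norm_ofReal_cpow_le_rpow ht.le hw

lemma integrableOn_cpow_div_log_sq (hw : w.re ≤ -1) (ha : 1 < a) :
    IntegrableOn (fun t : ℝ => (t : ℂ) ^ w / Real.log t ^ 2) (Ioi a) :=
  Integrable.mono' (integrableOn_inv_div_log_sq_Ioi ha)
    (Measurable.aestronglyMeasurable (by fun_prop))
    ((ae_restrict_iff' measurableSet_Ioi).mpr (.of_forall fun t (ht : a < t) =>
      norm_cpow_div_log_sq_le hw (ha.trans ht)))

lemma norm_integral_cpow_div_log_sq_le (hw : w.re ≤ -1) (ha : 1 < a) :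
    ‖∫ t in Ioi a, (t : ℂ) ^ w / Real.log t ^ 2‖ ≤ (Real.log a)⁻¹ := by
  rw [← integral_inv_div_log_sq_Ioi ha]
  exact norm_integral_le_of_norm_le (integrableOn_inv_div_log_sq_Ioi ha)
    ((ae_restrict_iff' measurableSet_Ioi).mpr (.of_forall fun t (ht : a < t) =>
      norm_cpow_div_log_sq_le hw (ha.trans ht)))

lemma tendsto_cpow_add_one_div_log (hw : w.re < -1) :
    Tendsto (fun t : ℝ => (t : ℂ) ^ (w + 1) / Real.log t) atTop (𝓝 0) := by
  have hpow : Tendsto (fun t : ℝ => t ^ (w.re + 1)) atTop (𝓝 0) := by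
    simpa using tendsto_rpow_neg_atTop (by linarith : 0 < -(w.re + 1))
  have hlim : Tendsto (fun t : ℝ => t ^ (w.re + 1) * (Real.log t)⁻¹) atTop (𝓝 0) := by
    simpa using hpow.mul Real.tendsto_log_atTop.inv_tendsto_atTop
  refine tendsto_zero_iff_norm_tendsto_zero.mpr (hlim.congr' ?_)
  filter_upwards [eventually_gt_atTop 1] with t ht
  rw [norm_div, Complex.norm_cpow_eq_rpow_re_of_pos (by linarith), Complex.norm_real,
    Real.norm_of_nonneg (Real.log_nonneg ht.le), Complex.add_re, Complex.one_re, div_eq_mul_inv]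

/-- Integration by parts against `t ^ (w + 1) / log t`. -/
lemma integral_cpow_div_log_eq (hw : w.re < -1) (ha : 1 < a) :
    (w + 1) * ∫ t in Ioi a, (t : ℂ) ^ w / Real.log t =
      (∫ t in Ioi a, (t : ℂ) ^ w / Real.log t ^ 2) - (a : ℂ) ^ (w + 1) / Real.log a := by
  have hw1 : w + 1 ≠ 0 := add_one_ne_zero_of_re_lt hw
  have hJ := integrableOn_cpow_div_log hw ha
  have hK := integrableOn_cpow_div_log_sq hw.le ha
  have hftc := integral_Ioi_of_hasDerivAt_of_tendsto'
    (fun t (ht : a ≤ t) => hasDerivAt_cpow_add_one_div_log hw1 (ha.trans_le ht))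
    ((hJ.const_mul (w + 1)).sub hK) (tendsto_cpow_add_one_div_log hw)
  rw [integral_sub (hJ.const_mul (w + 1)) hK, integral_const_mul] at hftc
  linear_combination hftc

lemma norm_partialSummationTail_div_log_le (hw : w.re < -1) (ha : 1 < a) :
    ‖partialSummationTail w a (fun t => t / Real.log t)‖ ≤
      (1 + ‖w‖) / ‖w + 1‖ * (Real.log a)⁻¹ := by
  have ha0 : (a : ℂ) ≠ 0 := by exact_mod_cast (zero_lt_one.trans ha).ne'
  have hlog : 0 < Real.log a := Real.log_pos ha
  have hw1 : w + 1 ≠ 0 := add_one_ne_zero_of_re_lt hw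
  set K := ∫ t in Ioi a, (t : ℂ) ^ w / Real.log t ^ 2
  have htail : partialSummationTail w a (fun t => t / Real.log t) =
      -((a : ℂ) ^ (w + 1) / Real.log a) - w * ∫ t in Ioi a, (t : ℂ) ^ w / Real.log t := by
    rw [partialSummationTail, ← integral_const_mul, Complex.cpow_add _ _ ha0, Complex.cpow_one]
    congr 1
    · ring
    · refine setIntegral_congr_fun measurableSet_Ioi fun t (ht : a < t) => ?_
      have ht0 : (t : ℂ) ≠ 0 := by exact_mod_cast (zero_lt_one.trans (ha.trans ht)).ne'
      rw [Complex.cpow_sub _ _ ht0, Complex.cpow_one]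
      field_simp
  have hsolve : partialSummationTail w a (fun t => t / Real.log t) =
      -((a : ℂ) ^ (w + 1) / Real.log a + w * K) / (w + 1) := by
    rw [eq_div_iff hw1, htail]
    linear_combination (-w) * integral_cpow_div_log_eq hw ha
  have hboundary : ‖(a : ℂ) ^ (w + 1) / Real.log a‖ ≤ (Real.log a)⁻¹ := by
    rw [norm_div, Complex.norm_real, Real.norm_of_nonneg hlog.le, div_eq_mul_inv]
    refine mul_le_of_le_one_left (by positivity) ?_
    simpa using norm_ofReal_cpow_le_rpow (w := w + 1) (r := 0) ha.le (by simp; linarith)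
  rw [hsolve, norm_div, norm_neg]
  calc ‖(a : ℂ) ^ (w + 1) / Real.log a + w * K‖ / ‖w + 1‖
      ≤ ((Real.log a)⁻¹ + ‖w‖ * (Real.log a)⁻¹) / ‖w + 1‖ := by
        gcongr
        refine (norm_add_le _ _).trans (add_le_add hboundary ?_)
        rw [norm_mul]
        gcongr
        exact norm_integral_cpow_div_log_sq_le hw.le ha
    _ = (1 + ‖w‖) / ‖w + 1‖ * (Real.log a)⁻¹ := by ring

end DivLog

lemma ofReal_cpow_add_cpow_conj_div_two {t : ℝ} (ht : 0 < t) (w : ℂ) :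
    ((t : ℂ) ^ w + (t : ℂ) ^ conj w) / 2 =
      ((Real.cos (w.im * Real.log t) * t ^ w.re : ℝ) : ℂ) := by
  have harg : (t : ℂ).arg ≠ Real.pi := by
    rw [Complex.arg_ofReal_of_nonneg ht.le]
    exact Real.pi_pos.ne
  rw [Complex.cpow_conj _ _ harg, Complex.conj_ofReal, Complex.add_conj,
    Complex.cpow_def_of_ne_zero (by exact_mod_cast ht.ne'), ← Complex.ofReal_log ht.le,
    Complex.exp_re, Real.rpow_def_of_pos ht]
  simp only [Complex.mul_re, Complex.mul_im, Complex.ofReal_re, Complex.ofReal_im]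
  push_cast
  ring_nf

lemma primeSum_eq_sum_Icc (g : ℕ → ℂ) (t : ℝ) :
    primeSum g t = ∑ k ∈ Finset.Icc 0 ⌊t⌋₊, {p : ℕ | p.Prime}.indicator g k := by
  rw [primeSum, Nat.primesBelow, Finset.sum_filter,
    Nat.range_eq_Icc_zero_sub_one _ (Nat.succ_ne_zero _), Nat.succ_sub_one]
  simp [Set.indicator_apply]

lemma sum_range_indicator_eq_sum_Ioc (F : ℕ → ℂ) {y : ℝ} (hy : 0 ≤ y) (N : ℕ) :
    ∑ n ∈ Finset.range (N + 1), {p : ℕ | p.Prime ∧ y < p}.indicator F n =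
      ∑ k ∈ Finset.Ioc ⌊y⌋₊ N, {p : ℕ | p.Prime}.indicator F k := by
  simp only [Set.indicator_apply, ← Finset.sum_filter]
  refine Finset.sum_congr (Finset.ext fun n => ?_) fun _ _ => rfl
  simp only [Finset.mem_filter, Finset.mem_range, Finset.mem_Ioc, Set.mem_ofPred_eq,
    Nat.floor_lt hy, Nat.lt_add_one_iff]
  tauto

lemma norm_tsum_prime_gt_le {F : ℕ → ℂ} {y : ℝ} (hy : 0 ≤ y) {l : ℂ} {B : ℝ}
    (hF : Tendsto (fun N => ∑ k ∈ Finset.Ioc ⌊y⌋₊ N, {p : ℕ | p.Prime}.indicator F k) atTop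
      (𝓝 l))
    (hl : ‖l‖ ≤ B) :
    ‖∑' p : {p : ℕ // p.Prime ∧ y < p}, F p‖ ≤ B := by
  -- The family need not be absolutely summable, in which case `tsum` is the junk value `0`.
  by_cases hsum : Summable fun p : {p : ℕ // p.Prime ∧ y < p} => F p
  · have h := (hasSum_subtype_iff_indicator (s := {p : ℕ | p.Prime ∧ y < p}).mp
      hsum.hasSum).tendsto_sum_nat
    rw [← tendsto_add_atTop_iff_nat 1] at h
    simp_rw [sum_range_indicator_eq_sum_Ioc F hy] at h
    rwa [tendsto_nhds_unique h hF]
  · rw [tsum_eq_zero_of_not_summable hsum, norm_zero]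
    exact (norm_nonneg l).trans hl

lemma tendsto_sum_Ioc_prime_mul_cos_mul_rpow (g : ℕ → ℂ) {w : ℂ} {y C : ℝ} (hw : w.re < -1)
    (hy : 0 < y) (hC : ∀ t, y ≤ t → ‖primeSum g t‖ ≤ C * t) :
    Tendsto (fun N => ∑ k ∈ Finset.Ioc ⌊y⌋₊ N, {p : ℕ | p.Prime}.indicator
        (fun n => g n * ((Real.cos (w.im * Real.log n) * (n : ℝ) ^ w.re : ℝ) : ℂ)) k) atTop
      (𝓝 ((partialSummationTail w y (primeSum g) +
        partialSummationTail (conj w) y (primeSum g)) / 2)) := by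
  have hprimeSum : primeSum g =
      fun t => ∑ k ∈ Finset.Icc 0 ⌊t⌋₊, {p : ℕ | p.Prime}.indicator g k :=
    funext (primeSum_eq_sum_Icc g)
  rw [hprimeSum] at hC ⊢
  have hw' : (conj w).re < -1 := by rwa [Complex.conj_re]
  refine (((tendsto_sum_Ioc_cpow_mul _ hw hy hC).add
    (tendsto_sum_Ioc_cpow_mul _ hw' hy hC)).div_const 2).congr fun N => ?_
  rw [← Finset.sum_add_distrib, Finset.sum_div]
  refine Finset.sum_congr rfl fun k hk => ?_
  have hk : (0 : ℝ) < k := Nat.cast_pos.mpr (Nat.zero_lt_of_lt (Finset.mem_Ioc.mp hk).1)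
  by_cases hp : k.Prime
  · simp only [Set.indicator_apply, Set.mem_ofPred_eq, hp, if_true]
    rw [← ofReal_cpow_add_cpow_conj_div_two hk]
    push_cast
    ring
  · simp [hp]

lemma norm_partialSummationTail_le_of_approx_div_log {A : ℝ → ℂ} {θ w : ℂ} {a M δ : ℝ}
    (hw : w.re < -1) (ha : 1 < a) (hM : ‖w‖ ≤ M) (hδ : 0 < δ) (hδw : δ ≤ ‖w + 1‖)
    (hA : AEStronglyMeasurable A (volume.restrict (Ioi a)))
    (hE : IntegrableOn (fun t : ℝ => ‖A t - θ * (t / Real.log t)‖ / t ^ 2) (Ioi a)) :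
    ‖partialSummationTail w a A‖ ≤ ‖A a - θ * (a / Real.log a)‖ / a +
      M * (∫ t in Ioi a, ‖A t - θ * (t / Real.log t)‖ / t ^ 2) +
        ‖θ‖ * ((1 + M) / δ * (Real.log a)⁻¹) := by
  set E : ℝ → ℂ := fun t => A t - θ * (t / Real.log t)
  have hEint : IntegrableOn (fun t : ℝ => w * (t : ℂ) ^ (w - 1) * E t) (Ioi a) :=
    integrableOn_mul_cpow_sub_one_mul_of_div_sq hw.le ha.le
      (hA.sub (Measurable.aestronglyMeasurable (by fun_prop))) hE
  have hhint : IntegrableOn (fun t : ℝ => w * (t : ℂ) ^ (w - 1) * (t / Real.log t)) (Ioi a) := by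
    refine integrableOn_mul_cpow_sub_one_mul_of_le_mul hw (by linarith)
      (Measurable.aestronglyMeasurable (by fun_prop)) (C := (Real.log a)⁻¹) fun t (ht : a < t) => ?_
    have hlog : Real.log a ≤ Real.log t := Real.log_le_log (by linarith) ht.le
    rw [← Complex.ofReal_div, Complex.norm_real,
      Real.norm_of_nonneg (div_nonneg (by linarith) (Real.log_nonneg (by linarith))),
      div_eq_mul_inv, mul_comm]
    exact mul_le_mul_of_nonneg_right (inv_anti₀ (Real.log_pos ha) hlog) (by linarith)
  have hsplit : partialSummationTail w a A =
      partialSummationTail w a E + θ * partialSummationTail w a (fun t => t / Real.log t) := by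
    rw [← partialSummationTail_add_mul hEint hhint]
    simp [E]
  have hmain : (1 + ‖w‖) / ‖w + 1‖ ≤ (1 + M) / δ :=
    div_le_div₀ (by linarith [norm_nonneg w]) (by linarith) hδ hδw
  rw [hsplit]
  calc _ ≤ ‖partialSummationTail w a E‖ +
        ‖θ‖ * ‖partialSummationTail w a (fun t => t / Real.log t)‖ := by
        rw [← norm_mul]
        exact norm_add_le _ _
    _ ≤ (‖E a‖ / a + ‖w‖ * ∫ t in Ioi a, ‖E t‖ / t ^ 2) +
        ‖θ‖ * ((1 + ‖w‖) / ‖w + 1‖ * (Real.log a)⁻¹) := by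
        gcongr
        · exact norm_partialSummationTail_le hw.le ha.le hE
        · exact norm_partialSummationTail_div_log_le hw ha
    _ ≤ _ := by
        have := Real.log_pos ha
        gcongr

lemma one_le_log_of_three_le {t : ℝ} (ht : 3 ≤ t) : 1 ≤ Real.log t := by
  rw [Real.le_log_iff_exp_le (by linarith)]
  linarith [Real.exp_one_lt_d9]

lemma tendsto_norm_div_self_of_tendsto_div_div_log {E : ℝ → ℂ}
    (h : Tendsto (fun t => E t / ((t / Real.log t : ℝ) : ℂ)) atTop (𝓝 0)) :
    Tendsto (fun t => ‖E t‖ / t) atTop (𝓝 0) := by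
  have hlim := h.norm.mul Real.tendsto_log_atTop.inv_tendsto_atTop
  rw [norm_zero, zero_mul] at hlim
  refine hlim.congr' ?_
  filter_upwards [eventually_gt_atTop 1] with t ht
  have hlog := Real.log_pos ht
  rw [Pi.inv_apply, norm_div, Complex.norm_real, Real.norm_of_nonneg (by positivity)]
  field_simp

lemma eventually_norm_le_mul_of_tendsto {A : ℝ → ℂ} {θ : ℂ}
    (h : Tendsto (fun t => ‖A t - θ * (t / Real.log t)‖ / t) atTop (𝓝 0)) :
    ∀ᶠ t in atTop, ‖A t‖ ≤ (1 + ‖θ‖) * t := by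
  filter_upwards [h.eventually (gt_mem_nhds one_pos), eventually_ge_atTop 3] with t hE ht
  have hlog := one_le_log_of_three_le ht
  have hE' : ‖A t - θ * (t / Real.log t)‖ ≤ t := ((div_lt_one (by linarith)).mp hE).le
  have hmain : ‖(t : ℂ) / Real.log t‖ ≤ t := by
    rw [← Complex.ofReal_div, Complex.norm_real, Real.norm_of_nonneg (by positivity)]
    exact div_le_self (by linarith) hlog
  calc ‖A t‖ = ‖(A t - θ * (t / Real.log t)) + θ * (t / Real.log t)‖ := by ring_nf
    _ ≤ t + ‖θ‖ * t := by
        refine (norm_add_le _ _).trans (add_le_add hE' ?_)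
        rw [norm_mul]
        gcongr
    _ = (1 + ‖θ‖) * t := by ring

/-- With `w = -(1 + 1 / log y) + i s` and `δ ≤ |s| ≤ R` one has `‖w‖ ≤ 2 + R` and
`‖w + 1‖ ≥ δ`, whence the constants. -/
noncomputable def primeTailBound (θ : ℂ) (g : ℕ → ℂ) (δ R y : ℝ) : ℝ :=
  ‖primeSum g y - θ * (y / Real.log y)‖ / y +
    (2 + R) * (∫ t in Ioi y, ‖primeSum g t - θ * (t / Real.log t)‖ / t ^ 2) +
      ‖θ‖ * ((3 + R) / δ * (Real.log y)⁻¹)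

lemma tendsto_primeTailBound {θ : ℂ} {g : ℕ → ℂ}
    (hE : Tendsto (fun t => ‖primeSum g t - θ * (t / Real.log t)‖ / t) atTop (𝓝 0)) (δ R : ℝ) :
    Tendsto (primeTailBound θ g δ R) atTop (𝓝 0) := by
  unfold primeTailBound
  simpa using (hE.add ((tendsto_integral_Ioi_zero tendsto_id).const_mul (2 + R))).add
    ((Real.tendsto_log_atTop.inv_tendsto_atTop.const_mul ((3 + R) / δ)).const_mul ‖θ‖)

lemma norm_tsum_prime_gt_mul_cos_mul_rpow_le {θ : ℂ} {g : ℕ → ℂ} {δ R C y s : ℝ} (hδ : 0 < δ)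
    (hy : 3 ≤ y) (hδs : δ ≤ |s|) (hsR : |s| ≤ R) (hC : ∀ t, y ≤ t → ‖primeSum g t‖ ≤ C * t)
    (hE : IntegrableOn (fun t : ℝ => ‖primeSum g t - θ * (t / Real.log t)‖ / t ^ 2) (Ioi y)) :
    ‖∑' p : {p : ℕ // p.Prime ∧ y < p}, g p * ((Real.cos (s * Real.log p) *
        ((p : ℕ) : ℝ) ^ (-(1 + 1 / Real.log y)) : ℝ) : ℂ)‖ ≤ primeTailBound θ g δ R y := by
  have hlog := one_le_log_of_three_le hy
  have hlog_inv : 0 < 1 / Real.log y ∧ 1 / Real.log y ≤ 1 :=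
    ⟨by positivity, (div_le_one (by linarith)).mpr hlog⟩
  set w : ℂ := ⟨-(1 + 1 / Real.log y), s⟩
  have hw : w.re < -1 := by simp only [w]; linarith
  have hwM : ‖w‖ ≤ 2 + R := by
    refine (Complex.norm_le_abs_re_add_abs_im w).trans ?_
    simp only [w, abs_neg]
    rw [abs_of_pos (by linarith)]
    linarith
  have hδw : δ ≤ ‖w + 1‖ := hδs.trans (by simpa [w] using Complex.abs_im_le_norm (w + 1))
  have hA : AEStronglyMeasurable (primeSum g) (volume.restrict (Ioi y)) := by
    rw [funext (primeSum_eq_sum_Icc g)]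
    fun_prop
  have htail : ∀ v : ℂ, v.re < -1 → ‖v‖ ≤ 2 + R → δ ≤ ‖v + 1‖ →
      ‖partialSummationTail v y (primeSum g)‖ ≤ primeTailBound θ g δ R y := by
    intro v hv hvM hδv
    refine (norm_partialSummationTail_le_of_approx_div_log hv (by linarith) hvM hδ hδv hA
      hE).trans_eq ?_
    rw [primeTailBound]
    ring
  have hconj : ‖conj w + 1‖ = ‖w + 1‖ := by
    rw [← Complex.norm_conj (w + 1), map_add, map_one]
  refine norm_tsum_prime_gt_le (by linarith)
    (tendsto_sum_Ioc_prime_mul_cos_mul_rpow g hw (by linarith) hC) ?_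
  rw [norm_div, Complex.norm_two]
  refine div_le_of_le_mul₀ zero_le_two ?_ ((norm_add_le _ _).trans ?_)
  · exact (norm_nonneg _).trans (htail w hw hwM hδw)
  · linarith [htail w hw hwM hδw, htail (conj w) (by rwa [Complex.conj_re])
      (by rwa [Complex.norm_conj]) (by rwa [hconj])]

/-- **Oscillating tail prime sums.** If `∑_{p ≤ t} g(p) = θ t/log t + E_g(t)` with
`E_g(t) = o(t/log t)` and `∫_2^∞ |E_g(t)| t^{-2} dt < ∞`, then for `s` in any compact
subset of `ℝ \ {0}` (i.e. `δ ≤ |s| ≤ R`),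
`∑_{p > y} g(p) cos(s log p) p^{-(1 + 1/log y)} → 0` as `y → ∞`, uniformly on that set. -/
theorem prime_tail_sum_oscillating
    (θ : ℂ) (g : ℕ → ℂ)
    (hsmall : Tendsto (fun t : ℝ =>
        (primeSum g t - θ * (t / Real.log t)) / ((t / Real.log t : ℝ) : ℂ))
      atTop (nhds 0))
    (hint : IntegrableOn
      (fun t : ℝ => ‖primeSum g t - θ * (t / Real.log t)‖ / t ^ 2)
      (Set.Ioi 2) volume) :
    ∀ δ R : ℝ, 0 < δ →
      TendstoUniformlyOn
        (fun (y : ℝ) (s : ℝ) =>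
          ∑' p : {p : ℕ // p.Prime ∧ y < p},
            g p * ((Real.cos (s * Real.log p) *
              ((p : ℕ) : ℝ) ^ (-(1 + 1 / Real.log y)) : ℝ) : ℂ))
        (fun _ => 0) atTop {s : ℝ | δ ≤ |s| ∧ |s| ≤ R} := by
  intro δ R hδ
  have hE := tendsto_norm_div_self_of_tendsto_div_div_log hsmall
  obtain ⟨T, hT⟩ := eventually_atTop.mp (eventually_norm_le_mul_of_tendsto hE)
  rw [Metric.tendstoUniformlyOn_iff]
  intro ε hε
  filter_upwards [(tendsto_primeTailBound hE δ R).eventually (gt_mem_nhds hε),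
    eventually_ge_atTop (max T 3)] with y hy hyT s ⟨hδs, hsR⟩
  have hy3 : 3 ≤ y := le_of_max_le_right hyT
  rw [dist_zero_left]
  exact (norm_tsum_prime_gt_mul_cos_mul_rpow_le hδ hy3 hδs hsR
    (fun t ht => hT t ((le_of_max_le_left hyT).trans ht))
    (hint.mono_set (Ioi_subset_Ioi (by linarith)))).trans_lt hy
end

section
/- For all real a, b, x: the derivative in x of e^{-bx}(a sin(ax) - b cos(ax)) / (a² + b²) equals e^{-bx} cos(ax), provided a² + b² ≠ 0. Consequently, |∫_1^T e^{-εv} cos(v) dv / v| is bounded by an absolute constant, uniformly over all ε ≥ 0 and T ≥ 1. -/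
/-!
With `F v = e^{-εv} (sin v - ε cos v) / (1 + ε²)`, the case `a = 1`, `b = ε` of the antiderivative,
integration by parts gives `∫₁ᵀ F'(v)/v dv = F(T)/T - F(1) + ∫₁ᵀ F(v)/v² dv`, and `|F| ≤ 2` on
`[0, ∞)` bounds each of the three terms by `2`, uniformly in `ε ≥ 0` and `T ≥ 1`.
-/

open Real Set MeasureTheory intervalIntegral

theorem hasDerivAt_exp_mul_sin_sub_cos_div (a b x : ℝ) (hab : a ^ 2 + b ^ 2 ≠ 0) :
    HasDerivAt (fun x : ℝ =>
        exp (-b * x) * (a * sin (a * x) - b * cos (a * x)) / (a ^ 2 + b ^ 2))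
      (exp (-b * x) * cos (a * x)) x := by
  have hlin (c : ℝ) : HasDerivAt (fun x : ℝ => c * x) c x := by
    simpa using (hasDerivAt_id x).const_mul c
  have hsin : HasDerivAt (fun x => sin (a * x)) (cos (a * x) * a) x :=
    (hasDerivAt_sin (a * x)).comp x (hlin a)
  have hcos : HasDerivAt (fun x => cos (a * x)) (-sin (a * x) * a) x :=
    (hasDerivAt_cos (a * x)).comp x (hlin a)
  have htrig : HasDerivAt (fun x => a * sin (a * x) - b * cos (a * x))
      (a * (cos (a * x) * a) - b * (-sin (a * x) * a)) x :=
    (hsin.const_mul a).sub (hcos.const_mul b)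
  refine (((hlin (-b)).exp.mul htrig).div_const (a ^ 2 + b ^ 2)).congr_deriv ?_
  field_simp
  ring

theorem abs_exp_mul_sin_sub_mul_cos_div_le {ε v : ℝ} (hε : 0 ≤ ε) (hv : 0 ≤ v) :
    |exp (-ε * v) * (sin v - ε * cos v) / (1 + ε ^ 2)| ≤ 2 := by
  have hexp : exp (-ε * v) ≤ 1 := exp_le_one_iff.2 (by nlinarith)
  have htrig : |sin v - ε * cos v| ≤ 1 + ε :=
    calc |sin v - ε * cos v| ≤ |sin v| + |ε| * |cos v| := by
          rw [← abs_mul]; exact abs_sub _ _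
      _ ≤ 1 + ε * 1 := by
          rw [abs_of_nonneg hε]
          gcongr
          exacts [abs_sin_le_one v, abs_cos_le_one v]
      _ = 1 + ε := by ring
  rw [abs_div, abs_mul, abs_of_pos (exp_pos _), abs_of_pos (by positivity : (0 : ℝ) < 1 + ε ^ 2),
    div_le_iff₀ (by positivity)]
  calc exp (-ε * v) * |sin v - ε * cos v| ≤ 1 * (1 + ε) :=
        mul_le_mul hexp htrig (abs_nonneg _) zero_le_one
    _ ≤ 2 * (1 + ε ^ 2) := by nlinarith [sq_nonneg (ε - 1)]

theorem abs_integral_div_le_of_hasDerivAt {f F : ℝ → ℝ} {M T : ℝ} (hT : 1 ≤ T)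
    (hF : ∀ x ∈ Icc 1 T, HasDerivAt F (f x) x) (hf : IntervalIntegrable f volume 1 T)
    (hM : ∀ x ∈ Icc 1 T, |F x| ≤ M) :
    |∫ x in (1 : ℝ)..T, f x / x| ≤ 3 * M := by
  have hpos : ∀ x ∈ Icc (1 : ℝ) T, 0 < x := fun x hx => zero_lt_one.trans_le hx.1
  have hinv : ∀ x ∈ uIcc 1 T, HasDerivAt (fun x : ℝ => x⁻¹) (-(x ^ 2)⁻¹) x := by
    rw [uIcc_of_le hT]
    exact fun x hx => hasDerivAt_inv (hpos x hx).ne'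
  have hinv' : IntervalIntegrable (fun x : ℝ => -(x ^ 2)⁻¹) volume 1 T := by
    refine (ContinuousOn.neg (ContinuousOn.inv₀ (by fun_prop) fun x hx => ?_)).intervalIntegrable
    rw [uIcc_of_le hT] at hx
    exact pow_ne_zero 2 (hpos x hx).ne'
  have hparts : ∫ x in (1 : ℝ)..T, f x / x =
      T⁻¹ * F T - 1⁻¹ * F 1 - ∫ x in (1 : ℝ)..T, -(x ^ 2)⁻¹ * F x := by
    simp_rw [div_eq_inv_mul]
    exact integral_mul_deriv_eq_deriv_mul hinv (by rwa [uIcc_of_le hT]) hinv' hf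
  have hrest : |∫ x in (1 : ℝ)..T, -(x ^ 2)⁻¹ * F x| ≤ M :=
    calc |∫ x in (1 : ℝ)..T, -(x ^ 2)⁻¹ * F x| ≤ ∫ x in (1 : ℝ)..T, -M * -(x ^ 2)⁻¹ := by
          rw [← Real.norm_eq_abs]
          refine norm_integral_le_of_norm_le hT (.of_forall fun x hx => ?_) (hinv'.const_mul _)
          replace hx := Ioc_subset_Icc_self hx
          have hx0 := hpos x hx
          rw [Real.norm_eq_abs, abs_mul, abs_neg, abs_inv, abs_of_pos (by positivity : 0 < x ^ 2),
            neg_mul_neg, mul_comm]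
          exact mul_le_mul_of_nonneg_right (hM x hx) (by positivity)
      _ = M * (1 - T⁻¹) := by
          rw [intervalIntegral.integral_const_mul, integral_eq_sub_of_hasDerivAt hinv hinv']
          ring
      _ ≤ M := by
          have hM0 : 0 ≤ M := (abs_nonneg _).trans (hM 1 ⟨le_rfl, hT⟩)
          have hT' : 0 < T⁻¹ := by positivity
          nlinarith
  have hFT : |T⁻¹ * F T| ≤ M := by
    rw [abs_mul, abs_inv, abs_of_pos (hpos T ⟨hT, le_rfl⟩)]
    calc T⁻¹ * |F T| ≤ 1 * M :=
          mul_le_mul (inv_le_one_of_one_le₀ hT) (hM T ⟨hT, le_rfl⟩) (abs_nonneg _) zero_le_one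
      _ = M := one_mul M
  have hF1 : |(1 : ℝ)⁻¹ * F 1| ≤ M := by simpa using hM 1 ⟨le_rfl, hT⟩
  rw [hparts]
  calc _ ≤ |T⁻¹ * F T| + |(1 : ℝ)⁻¹ * F 1| + |∫ x in (1 : ℝ)..T, -(x ^ 2)⁻¹ * F x| :=
        (abs_sub _ _).trans (add_le_add_left (abs_sub _ _) _)
    _ ≤ 3 * M := by linarith

/-- The function `x ↦ e^{-bx}(a sin(ax) - b cos(ax))/(a² + b²)` is an antiderivative of
`x ↦ e^{-bx} cos(ax)` (for `a² + b² ≠ 0`); consequently `|∫_1^T e^{-εv} cos v dv / v|`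
is bounded by an absolute constant, uniformly over `ε ≥ 0` and `T ≥ 1`. -/
theorem exp_cos_antideriv_and_uniform_bound :
    (∀ a b x : ℝ, a ^ 2 + b ^ 2 ≠ 0 →
      HasDerivAt (fun x : ℝ =>
          Real.exp (-b * x) * (a * Real.sin (a * x) - b * Real.cos (a * x)) /
            (a ^ 2 + b ^ 2))
        (Real.exp (-b * x) * Real.cos (a * x)) x) ∧
    (∃ C : ℝ, 0 < C ∧ ∀ ε T : ℝ, 0 ≤ ε → 1 ≤ T →
      |∫ v in (1 : ℝ)..T, Real.exp (-ε * v) * Real.cos v / v| ≤ C) := by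
  refine ⟨hasDerivAt_exp_mul_sin_sub_cos_div, 6, by norm_num, fun ε T hε hT => ?_⟩
  have hF (x : ℝ) : HasDerivAt (fun v => exp (-ε * v) * (sin v - ε * cos v) / (1 + ε ^ 2))
      (exp (-ε * x) * cos x) x := by
    simpa using hasDerivAt_exp_mul_sin_sub_cos_div 1 ε x (by positivity)
  have hbound := abs_integral_div_le_of_hasDerivAt hT (fun x _ => hF x)
    (Continuous.intervalIntegrable (by fun_prop) _ _)
    (fun x hx => abs_exp_mul_sin_sub_mul_cos_div_le hε (zero_le_one.trans hx.1))
  linarith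
end

section
/- Let f : ℕ → ℂ be multiplicative and define f̃(n) = ∑_{g : rad(g) | rad(n)} |conj(f(g)) f(gn)| / g, the sum being over positive integers g all of whose prime factors divide n. Then for every prime p and integer i ≥ 1, Cauchy–Schwarz yields f̃(p^i)² ≤ 2|f(p^i)|² + 2 (∑_{j≥1} |f(p^j)|²/p^j)(∑_{j≥1} |f(p^{i+j})|²/p^j), and (f̃(p) - |f(p)|)² ≤ (∑_{j≥1} |f(p^j)|²/p^j)(∑_{j≥1} |f(p^{j+1})|²/p^j), assuming all the series converge. -/
set_option maxHeartbeats 1000000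

/-- Cauchy–Schwarz for `tsum` over `ℕ` with nonnegative terms. -/
lemma tsum_cs {a b : ℕ → ℝ} (ha : ∀ n, 0 ≤ a n) (hb : ∀ n, 0 ≤ b n)
    (hab : Summable (fun n => a n * b n)) (ha2 : Summable (fun n => a n ^ 2))
    (hb2 : Summable (fun n => b n ^ 2)) :
    (∑' n, a n * b n) ^ 2 ≤ (∑' n, a n ^ 2) * (∑' n, b n ^ 2) := by
  have hA : 0 ≤ ∑' n, a n ^ 2 := tsum_nonneg fun n => sq_nonneg _
  have hB : 0 ≤ ∑' n, b n ^ 2 := tsum_nonneg fun n => sq_nonneg _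
  have h : ∑' n, a n * b n ≤ Real.sqrt ((∑' n, a n ^ 2) * (∑' n, b n ^ 2)) := by
    refine Summable.tsum_le_of_sum_le hab fun s => ?_
    rw [Real.le_sqrt (Finset.sum_nonneg fun i _ => mul_nonneg (ha i) (hb i)) (mul_nonneg hA hB)]
    calc (∑ n ∈ s, a n * b n) ^ 2 ≤ (∑ n ∈ s, a n ^ 2) * ∑ n ∈ s, b n ^ 2 :=
          Finset.sum_mul_sq_le_sq_mul_sq s a b
      _ ≤ (∑' n, a n ^ 2) * (∑' n, b n ^ 2) := by
          apply mul_le_mul (Summable.sum_le_tsum s (fun i _ => sq_nonneg _) ha2)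
            (Summable.sum_le_tsum s (fun i _ => sq_nonneg _) hb2)
            (Finset.sum_nonneg fun i _ => sq_nonneg _) hA
  calc (∑' n, a n * b n) ^ 2 ≤ Real.sqrt ((∑' n, a n ^ 2) * (∑' n, b n ^ 2)) ^ 2 := by
        apply pow_le_pow_left₀ (tsum_nonneg fun n => mul_nonneg (ha n) (hb n)) h
    _ = _ := Real.sq_sqrt (mul_nonneg hA hB)

/-- **Cauchy–Schwarz bounds for `f̃` at prime powers.** Let `f : ℕ → ℂ` be multiplicative
and set `f̃(p^i) = ∑_{j ≥ 0} |f(p^j) f(p^{j+i})| / p^j`. Then, assuming all the series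
converge, for every prime `p` and `i ≥ 1`,
`f̃(p^i)² ≤ 2|f(p^i)|² + 2 (∑_{j≥1} |f(p^j)|²/p^j)(∑_{j≥1} |f(p^{i+j})|²/p^j)` and
`(f̃(p) - |f(p)|)² ≤ (∑_{j≥1} |f(p^j)|²/p^j)(∑_{j≥1} |f(p^{j+1})|²/p^j)`. -/
theorem tilde_f_cauchy_schwarz_bounds
    (f : ℕ → ℂ) (hf1 : f 1 = 1)
    (hfmult : ∀ m n : ℕ, Nat.Coprime m n → f (m * n) = f m * f n)
    (p : ℕ) (hp : p.Prime)
    (hS0 : ∀ i : ℕ, Summable fun j : ℕ =>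
      ‖f (p ^ j)‖ * ‖f (p ^ (j + i))‖ / (p : ℝ) ^ j)
    (hS1 : Summable fun j : ℕ => ‖f (p ^ (j + 1))‖ ^ 2 / (p : ℝ) ^ (j + 1))
    (hS2 : ∀ i : ℕ, Summable fun j : ℕ =>
      ‖f (p ^ (i + j + 1))‖ ^ 2 / (p : ℝ) ^ (j + 1))
    (hS3 : Summable fun j : ℕ => ‖f (p ^ (j + 2))‖ ^ 2 / (p : ℝ) ^ (j + 1)) :
    (∀ i : ℕ, 1 ≤ i →
      (∑' j : ℕ, ‖f (p ^ j)‖ * ‖f (p ^ (j + i))‖ / (p : ℝ) ^ j) ^ 2 ≤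
        2 * ‖f (p ^ i)‖ ^ 2 +
        2 * (∑' j : ℕ, ‖f (p ^ (j + 1))‖ ^ 2 / (p : ℝ) ^ (j + 1)) *
            (∑' j : ℕ, ‖f (p ^ (i + j + 1))‖ ^ 2 / (p : ℝ) ^ (j + 1))) ∧
    ((∑' j : ℕ, ‖f (p ^ j)‖ * ‖f (p ^ (j + 1))‖ / (p : ℝ) ^ j) - ‖f p‖) ^ 2 ≤
      (∑' j : ℕ, ‖f (p ^ (j + 1))‖ ^ 2 / (p : ℝ) ^ (j + 1)) *
      (∑' j : ℕ, ‖f (p ^ (j + 2))‖ ^ 2 / (p : ℝ) ^ (j + 1)) := by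
  have hp0 : (0:ℝ) < p := by exact_mod_cast hp.pos
  -- the tail bound, for every i
  have key : ∀ i : ℕ,
      (∑' j : ℕ, ‖f (p ^ (j + 1))‖ * ‖f (p ^ (j + 1 + i))‖ / (p : ℝ) ^ (j + 1)) ^ 2 ≤
      (∑' j : ℕ, ‖f (p ^ (j + 1))‖ ^ 2 / (p : ℝ) ^ (j + 1)) *
      (∑' j : ℕ, ‖f (p ^ (i + j + 1))‖ ^ 2 / (p : ℝ) ^ (j + 1)) := by
    intro i
    have hpow : ∀ j : ℕ, (0:ℝ) ≤ (p:ℝ) ^ (j+1) := fun j => by positivity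
    have hsqpos : ∀ j : ℕ, (0:ℝ) < Real.sqrt ((p:ℝ) ^ (j+1)) :=
      fun j => Real.sqrt_pos.mpr (by positivity)
    have hab : ∀ j : ℕ, (‖f (p ^ (j + 1))‖ / Real.sqrt ((p : ℝ) ^ (j + 1))) *
        (‖f (p ^ (i + j + 1))‖ / Real.sqrt ((p : ℝ) ^ (j + 1))) =
        ‖f (p ^ (j + 1))‖ * ‖f (p ^ (j + 1 + i))‖ / (p : ℝ) ^ (j + 1) := by
      intro j
      have e : i + j + 1 = j + 1 + i := by ring
      rw [e, div_mul_div_comm, Real.mul_self_sqrt (hpow j)]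
    have ha2 : ∀ j : ℕ, (‖f (p ^ (j + 1))‖ / Real.sqrt ((p : ℝ) ^ (j + 1))) ^ 2 =
        ‖f (p ^ (j + 1))‖ ^ 2 / (p : ℝ) ^ (j + 1) := by
      intro j; rw [div_pow, Real.sq_sqrt (hpow j)]
    have hb2 : ∀ j : ℕ, (‖f (p ^ (i + j + 1))‖ / Real.sqrt ((p : ℝ) ^ (j + 1))) ^ 2 =
        ‖f (p ^ (i + j + 1))‖ ^ 2 / (p : ℝ) ^ (j + 1) := by
      intro j; rw [div_pow, Real.sq_sqrt (hpow j)]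
    have hsab : Summable fun j : ℕ => (‖f (p ^ (j + 1))‖ / Real.sqrt ((p : ℝ) ^ (j + 1))) *
        (‖f (p ^ (i + j + 1))‖ / Real.sqrt ((p : ℝ) ^ (j + 1))) := by
      simp only [hab]
      exact (summable_nat_add_iff 1).mpr (hS0 i)
    have hCS := tsum_cs (a := fun j => ‖f (p ^ (j + 1))‖ / Real.sqrt ((p : ℝ) ^ (j + 1)))
      (b := fun j => ‖f (p ^ (i + j + 1))‖ / Real.sqrt ((p : ℝ) ^ (j + 1)))
      (fun n => div_nonneg (norm_nonneg _) (hsqpos n).le)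
      (fun n => div_nonneg (norm_nonneg _) (hsqpos n).le)
      hsab (by simp only [ha2]; exact hS1) (by simp only [hb2]; exact hS2 i)
    simp only [hab, ha2, hb2] at hCS
    exact hCS
  -- splitting off the first term
  have split : ∀ i : ℕ,
      (∑' j : ℕ, ‖f (p ^ j)‖ * ‖f (p ^ (j + i))‖ / (p : ℝ) ^ j) =
      ‖f (p ^ i)‖ + ∑' j : ℕ, ‖f (p ^ (j + 1))‖ * ‖f (p ^ (j + 1 + i))‖ / (p : ℝ) ^ (j + 1) := by
    intro i
    rw [Summable.tsum_eq_zero_add (hS0 i)]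
    congr 1
    simp [hf1]
  constructor
  · intro i hi
    rw [split i]
    set x := ‖f (p ^ i)‖
    set T := ∑' j : ℕ, ‖f (p ^ (j + 1))‖ * ‖f (p ^ (j + 1 + i))‖ / (p : ℝ) ^ (j + 1)
    have hT : T ^ 2 ≤ (∑' j : ℕ, ‖f (p ^ (j + 1))‖ ^ 2 / (p : ℝ) ^ (j + 1)) *
      (∑' j : ℕ, ‖f (p ^ (i + j + 1))‖ ^ 2 / (p : ℝ) ^ (j + 1)) := key i
    nlinarith [sq_nonneg (x - T)]
  · have h1 := split 1
    have h2 := key 1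
    have e1 : ∀ j : ℕ, 1 + j + 1 = j + 2 := fun j => by ring
    simp_rw [e1] at h2
    rw [pow_one] at h1
    rw [h1, add_sub_cancel_left]
    exact h2
end

section
/- Let g be a nonnegative multiplicative function such that ∑_{p ≤ t} g(p) (log p)/p ∼ θ log t as t → ∞ for some θ > 0, and ∑_p (g(p)²/p² + ∑_{i ≥ 2} g(p^i)/p^i) < ∞. Define E(t) = ∑_{p ≤ t} (g(p) - θ)(log p)/p. Then E(t) = o(log t) as t → ∞, and the function L(log x) = C · exp(∫_2^x E(t)/(t log² t) dt) is slowly varying: L(λu)/L(u) → 1 as u → ∞ for every fixed λ > 0. -/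
/-!
Legendre's formula `log n! = ∑_{p ≤ n} v_p(n!) log p` with `n/p - 1 ≤ v_p(n!) ≤ n/(p - 1)`,
together with `n log n - n ≤ log n! ≤ n log n`, gives Mertens' estimate
`∑_{p ≤ n} log p / p = log n + O(1)`; subtracting `θ` times it from the hypothesis gives
`E(t) = o(log t)`. The ratio `L(λu)/L(u)` is `exp ∫_{e^u}^{e^{λu}} E(t)/(t log² t) dt`, and once
`|E(t)| ≤ ε log t` this integral is at most `ε |log λ|`, because `log log t` is a primitive of
`1/(t log t)`.
-/

open Filter

/-- `E(t) = ∑_{p ≤ t} (g(p) - θ) log p / p`. -/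
noncomputable def mertensError (g : ℕ → ℝ) (θ : ℝ) (t : ℝ) : ℝ :=
  ∑ p ∈ Nat.primesBelow (⌊t⌋₊ + 1), (g p - θ) * Real.log p / p

open Finset Real MeasureTheory Topology
open scoped Nat

lemma log_factorial_eq_sum_primesLE (n : ℕ) :
    log (n ! : ℕ) = ∑ p ∈ Nat.primesLE n, ((n !).factorization p : ℝ) * log p := by
  rw [log_nat_eq_sum_factorization]
  refine Finsupp.sum_of_support_subset _ (fun p hp => ?_) _ fun p _ => by simp
  rw [Nat.support_factorization, Nat.mem_primeFactors] at hp
  simpa [Nat.primesLE, Nat.mem_primesBelow, Nat.lt_succ_iff, hp.1] using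
    hp.1.dvd_factorial.1 hp.2.1

lemma div_le_factorization_factorial {p : ℕ} (hp : p.Prime) (n : ℕ) :
    n / p ≤ (n !).factorization p := by
  rw [Nat.factorization_factorial hp (b := Nat.log p n + 2) (by omega)]
  simpa using Finset.single_le_sum (f := fun i => n / p ^ i) (fun _ _ => Nat.zero_le _)
    (show 1 ∈ Ico 1 (Nat.log p n + 2) by simp)

lemma div_sub_one_le_factorization_factorial {p : ℕ} (hp : p.Prime) (n : ℕ) :
    (n : ℝ) / p - 1 ≤ (n !).factorization p := by
  have h := Nat.sub_one_lt_floor ((n : ℝ) / p)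
  rw [Nat.floor_div_eq_div] at h
  exact h.le.trans (by exact_mod_cast div_le_factorization_factorial hp n)

lemma factorization_factorial_le_div_sub_one {p : ℕ} (hp : p.Prime) (n : ℕ) :
    ((n !).factorization p : ℝ) ≤ n / (p - 1) := by
  have hp1 : (1 : ℝ) < p := by exact_mod_cast hp.one_lt
  have h : (((p - 1) * (n !).factorization p : ℕ) : ℝ) ≤ n := by
    exact_mod_cast (Nat.sub_one_mul_factorization_factorial hp).trans_le (Nat.sub_le _ _)
  push_cast [Nat.cast_sub hp.one_le] at h
  rw [le_div_iff₀ (by linarith)]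
  linarith

lemma log_div_mul_sub_one_le {x : ℝ} (hx : 2 ≤ x) :
    log x / (x * (x - 1)) ≤ 4 * x ^ (-3 / 2 : ℝ) := by
  have hlog : log x ≤ 2 * x ^ (1 / 2 : ℝ) := by
    linarith [log_le_rpow_div (by linarith : 0 ≤ x) (by norm_num : (0 : ℝ) < 1 / 2)]
  have hrpow : x ^ (-3 / 2 : ℝ) = x ^ (1 / 2 : ℝ) / x ^ 2 := by
    rw [← rpow_natCast, ← rpow_sub (by linarith)]
    norm_num
  have hs : 0 ≤ x ^ (1 / 2 : ℝ) := by positivity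
  rw [hrpow, mul_div_assoc', div_le_div_iff₀ (by nlinarith) (by positivity)]
  nlinarith [mul_le_mul_of_nonneg_right hlog (sq_nonneg x),
    mul_nonneg hs (mul_nonneg (by linarith : 0 ≤ x) (by linarith : 0 ≤ x - 2))]

lemma sum_primesLE_log_div_mul_sub_one_le (n : ℕ) :
    ∑ p ∈ Nat.primesLE n, log p / (p * (p - 1)) ≤ 4 * ∑' m : ℕ, (m : ℝ) ^ (-3 / 2 : ℝ) := by
  calc ∑ p ∈ Nat.primesLE n, log p / (p * (p - 1))
      ≤ ∑ p ∈ Nat.primesLE n, 4 * (p : ℝ) ^ (-3 / 2 : ℝ) :=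
        sum_le_sum fun p hp => log_div_mul_sub_one_le (by
          exact_mod_cast (Nat.prime_of_mem_primesBelow hp).two_le)
    _ ≤ 4 * ∑' m : ℕ, (m : ℝ) ^ (-3 / 2 : ℝ) := by
        rw [← mul_sum]
        gcongr
        exact (summable_nat_rpow.2 (by norm_num)).sum_le_tsum _ fun m _ => by positivity

lemma mul_sum_primesLE_log_div_sub_le_log_factorial (n : ℕ) :
    n * ∑ p ∈ Nat.primesLE n, log p / p - n * log 4 ≤ log (n ! : ℕ) := by
  calc n * ∑ p ∈ Nat.primesLE n, log p / p - n * log 4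
      ≤ n * ∑ p ∈ Nat.primesLE n, log p / p - Chebyshev.theta n := by
        linarith [Chebyshev.theta_le_log4_mul_x (Nat.cast_nonneg n)]
    _ = ∑ p ∈ Nat.primesLE n, ((n : ℝ) / p - 1) * log p := by
        rw [Chebyshev.theta_eq_sum_primesLE_log, mul_sum, ← sum_sub_distrib]
        exact sum_congr rfl fun p _ => by ring
    _ ≤ ∑ p ∈ Nat.primesLE n, ((n !).factorization p : ℝ) * log p :=
        sum_le_sum fun p hp => mul_le_mul_of_nonneg_right
          (div_sub_one_le_factorization_factorial (Nat.prime_of_mem_primesBelow hp) n)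
          (log_natCast_nonneg p)
    _ = log (n ! : ℕ) := (log_factorial_eq_sum_primesLE n).symm

lemma log_factorial_le_mul_sum_primesLE (n : ℕ) :
    log (n ! : ℕ) ≤ n * (∑ p ∈ Nat.primesLE n, log p / p +
      ∑ p ∈ Nat.primesLE n, log p / (p * (p - 1))) := by
  rw [log_factorial_eq_sum_primesLE, ← sum_add_distrib, mul_sum]
  refine sum_le_sum fun p hp => ?_
  have hp1 : (1 : ℝ) < p := by exact_mod_cast (Nat.prime_of_mem_primesBelow hp).one_lt
  have hsplit : log p / p + log p / (p * (p - 1)) = log p / (p - 1) := by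
    have : (p : ℝ) - 1 ≠ 0 := by linarith
    field_simp
    ring
  calc ((n !).factorization p : ℝ) * log p ≤ n / (p - 1) * log p :=
        mul_le_mul_of_nonneg_right
          (factorization_factorial_le_div_sub_one (Nat.prime_of_mem_primesBelow hp) n)
          (log_natCast_nonneg p)
    _ = n * (log p / p + log p / (p * (p - 1))) := by rw [hsplit]; ring

lemma sum_primesLE_log_div_le (n : ℕ) :
    ∑ p ∈ Nat.primesLE n, log p / p ≤ log n + log 4 := by
  rcases Nat.eq_zero_or_pos n with rfl | hn
  · simp [Nat.primesLE, Nat.primesBelow, Finset.filter_singleton, Nat.not_prime_zero]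
    positivity
  have hn' : (0 : ℝ) < n := by exact_mod_cast hn
  have hfact : log (n ! : ℕ) ≤ n * log n := by
    rw [← log_pow]
    exact log_le_log (by positivity) (by exact_mod_cast Nat.factorial_le_pow n)
  have := (mul_sum_primesLE_log_div_sub_le_log_factorial n).trans hfact
  nlinarith

lemma log_sub_le_sum_primesLE_log_div {n : ℕ} (hn : n ≠ 0) :
    log n - 1 - 4 * ∑' m : ℕ, (m : ℝ) ^ (-3 / 2 : ℝ) ≤ ∑ p ∈ Nat.primesLE n, log p / p := by
  have hn' : (0 : ℝ) < n := by exact_mod_cast Nat.pos_of_ne_zero hn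
  have hfact : n * log n - n ≤ log (n ! : ℕ) := by
    have hlogn : 0 ≤ log n := log_natCast_nonneg n
    have hlogpi : 0 ≤ log (2 * π) := log_nonneg (by nlinarith [pi_gt_three])
    linarith [Stirling.le_log_factorial_stirling hn]
  have := hfact.trans (log_factorial_le_mul_sum_primesLE n)
  nlinarith [sum_primesLE_log_div_mul_sub_one_le n]

lemma abs_sum_primesLE_floor_log_div_sub_log_le {t : ℝ} (ht : 1 ≤ t) :
    |∑ p ∈ Nat.primesLE ⌊t⌋₊, log p / p - log t| ≤
      1 + 4 * ∑' m : ℕ, (m : ℝ) ^ (-3 / 2 : ℝ) + log 4 := by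
  have hn : 1 ≤ ⌊t⌋₊ := Nat.one_le_floor_iff t |>.2 ht
  have hn' : (1 : ℝ) ≤ ⌊t⌋₊ := by exact_mod_cast hn
  have hlow : log ⌊t⌋₊ ≤ log t := log_le_log (by linarith) (Nat.floor_le (by linarith))
  have hupp : log t ≤ log ⌊t⌋₊ + log 4 := by
    rw [← log_mul (by linarith) (by norm_num)]
    exact log_le_log (by linarith) (by linarith [Nat.lt_floor_add_one t])
  have htsum : 0 ≤ ∑' m : ℕ, (m : ℝ) ^ (-3 / 2 : ℝ) := tsum_nonneg fun m => by positivity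
  rw [abs_le]
  constructor
  · linarith [log_sub_le_sum_primesLE_log_div (Nat.one_le_iff_ne_zero.1 hn)]
  · linarith [sum_primesLE_log_div_le ⌊t⌋₊, log_nonneg (by norm_num : (1 : ℝ) ≤ 4)]

theorem tendsto_sum_primesLE_floor_log_div_div_log :
    Tendsto (fun t : ℝ => (∑ p ∈ Nat.primesLE ⌊t⌋₊, log p / p) / log t) atTop (𝓝 1) := by
  have hO : (fun t : ℝ => ∑ p ∈ Nat.primesLE ⌊t⌋₊, log p / p - log t) =O[atTop]
      (fun _ => (1 : ℝ)) := by
    refine Asymptotics.IsBigO.of_bound (1 + 4 * ∑' m : ℕ, (m : ℝ) ^ (-3 / 2 : ℝ) + log 4) ?_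
    filter_upwards [eventually_ge_atTop 1] with t ht
    simpa using abs_sum_primesLE_floor_log_div_sub_log_le ht
  have h := ((hO.trans_isLittleO isLittleO_const_log_atTop).tendsto_div_nhds_zero).const_add 1
  rw [add_zero] at h
  refine h.congr' ?_
  filter_upwards [eventually_gt_atTop 1] with t ht
  have := (log_pos ht).ne'
  field_simp
  ring

lemma tendsto_mertensError_div_log {g : ℕ → ℝ} {θ : ℝ}
    (hlog : Tendsto (fun t : ℝ =>
        (∑ p ∈ Nat.primesBelow (⌊t⌋₊ + 1), g p * log p / p) / log t) atTop (𝓝 θ)) :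
    Tendsto (fun t : ℝ => mertensError g θ t / log t) atTop (𝓝 0) := by
  have h := hlog.sub (tendsto_sum_primesLE_floor_log_div_div_log.const_mul θ)
  rw [mul_one, sub_self] at h
  refine h.congr fun t => ?_
  rw [mertensError, Nat.primesLE, ← mul_div_assoc, ← sub_div, mul_sum, ← sum_sub_distrib]
  exact congrArg (· / log t) (sum_congr rfl fun p _ => by ring)

lemma measurable_mertensError (g : ℕ → ℝ) (θ : ℝ) : Measurable (mertensError g θ) :=
  show Measurable ((fun n : ℕ => ∑ p ∈ Nat.primesBelow (n + 1), (g p - θ) * log p / p) ∘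
    Nat.floor) from measurable_from_nat.comp Nat.measurable_floor

lemma abs_mertensError_le (g : ℕ → ℝ) (θ : ℝ) {t b : ℝ} (htb : t ≤ b) :
    |mertensError g θ t| ≤ ∑ p ∈ Nat.primesLE ⌊b⌋₊, |(g p - θ) * log p / p| :=
  (abs_sum_le_sum_abs _ _).trans <| sum_le_sum_of_subset_of_nonneg
    (Nat.primesBelow_mono (by gcongr)) fun _ _ _ => abs_nonneg _

lemma intervalIntegrable_mertensError_div_mul_log_sq (g : ℕ → ℝ) (θ : ℝ) {a b : ℝ}
    (ha : 2 ≤ a) (hb : 2 ≤ b) :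
    IntervalIntegrable (fun t => mertensError g θ t / (t * log t ^ 2)) volume a b := by
  set B := ∑ p ∈ Nat.primesLE ⌊max a b⌋₊, |(g p - θ) * log p / p|
  refine IntervalIntegrable.mono_fun' (g := fun _ => B / (2 * log 2 ^ 2)) intervalIntegrable_const
    ((measurable_mertensError g θ).div
      (measurable_id.mul (measurable_log.pow_const 2))).aestronglyMeasurable ?_
  refine ae_restrict_of_forall_mem measurableSet_uIoc fun t ht => ?_
  have ht2 : 2 ≤ t := (le_min ha hb).trans (Set.uIoc_subset_uIcc ht).1
  have hden : 2 * log 2 ^ 2 ≤ t * log t ^ 2 := by gcongr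
  dsimp only
  rw [norm_div, Real.norm_eq_abs, Real.norm_of_nonneg (by positivity)]
  exact div_le_div₀ ((abs_nonneg _).trans (abs_mertensError_le g θ (Set.uIoc_subset_uIcc ht).2))
    (abs_mertensError_le g θ (Set.uIoc_subset_uIcc ht).2) (by positivity) hden

lemma continuousOn_inv_mul_log {s : Set ℝ} (hs : ∀ t ∈ s, 1 < t) :
    ContinuousOn (fun t => (t * log t)⁻¹) s :=
  (continuousOn_id.mul (continuousOn_log.mono fun t ht => (zero_lt_one.trans (hs t ht)).ne')).inv₀
    fun t ht => mul_ne_zero (zero_lt_one.trans (hs t ht)).ne' (log_pos (hs t ht)).ne'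

lemma one_lt_of_mem_uIcc {a b t : ℝ} (ha : 1 < a) (hb : 1 < b) (ht : t ∈ Set.uIcc a b) : 1 < t :=
  (lt_min ha hb).trans_le ht.1

lemma integral_inv_mul_log {a b : ℝ} (ha : 1 < a) (hb : 1 < b) :
    ∫ t in a..b, (t * log t)⁻¹ = log (log b) - log (log a) := by
  refine intervalIntegral.integral_eq_sub_of_hasDerivAt (f := fun x => log (log x)) (fun t ht => ?_)
    ((continuousOn_inv_mul_log fun t => one_lt_of_mem_uIcc ha hb).intervalIntegrable)
  have ht := one_lt_of_mem_uIcc ha hb ht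
  have h := (hasDerivAt_log (zero_lt_one.trans ht).ne').log (log_pos ht).ne'
  rwa [div_eq_mul_inv, ← mul_inv] at h

lemma abs_integral_div_mul_log_sq_le {E : ℝ → ℝ} {a b c : ℝ} (ha : 1 < a) (hb : 1 < b)
    (hE : ∀ t ∈ Set.uIcc a b, |E t| ≤ c * log t) :
    |∫ t in a..b, E t / (t * log t ^ 2)| ≤ c * |log (log b) - log (log a)| := by
  have hc : 0 ≤ c := nonneg_of_mul_nonneg_left ((abs_nonneg _).trans (hE a Set.left_mem_uIcc))
    (log_pos ha)
  have hint : IntervalIntegrable (fun t => c * (t * log t)⁻¹) volume a b :=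
    (continuousOn_const.mul
      (continuousOn_inv_mul_log fun t => one_lt_of_mem_uIcc ha hb)).intervalIntegrable
  refine (intervalIntegral.norm_integral_le_abs_of_norm_le
    (f := fun t => E t / (t * log t ^ 2)) ?_ hint).trans_eq ?_
  · refine ae_restrict_of_forall_mem measurableSet_uIoc fun t ht => ?_
    have ht' := Set.uIoc_subset_uIcc ht
    have hlog := log_pos (one_lt_of_mem_uIcc ha hb ht')
    have ht0 : 0 < t := by linarith [one_lt_of_mem_uIcc ha hb ht']
    have hden : 0 < t * log t ^ 2 := by positivity
    rw [Real.norm_eq_abs, abs_div, abs_of_pos hden, div_le_iff₀ hden]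
    calc |E t| ≤ c * log t := hE t ht'
      _ = c * (t * log t)⁻¹ * (t * log t ^ 2) := by field_simp
  · rw [intervalIntegral.integral_const_mul, integral_inv_mul_log ha hb, abs_mul, abs_of_nonneg hc]

theorem tendsto_integral_exp_exp_mul_of_tendsto_div_log {E : ℝ → ℝ}
    (hE : Tendsto (fun t => E t / log t) atTop (𝓝 0)) {lam : ℝ} (hlam : 0 < lam) :
    Tendsto (fun u => ∫ t in exp u..exp (lam * u), E t / (t * log t ^ 2)) atTop (𝓝 0) := by
  rw [Metric.tendsto_nhds]
  intro ε hε
  set c := ε / (|log lam| + 1)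
  have hc : 0 < c := by positivity
  have hEc : ∀ᶠ t in atTop, ∀ s, t ≤ s → |E s| ≤ c * log s := by
    refine eventually_forall_ge_atTop.2 ?_
    filter_upwards [(Metric.tendsto_nhds.1 hE) c hc, eventually_gt_atTop 1] with t ht ht1
    rw [Real.dist_eq, sub_zero, abs_div, abs_of_pos (log_pos ht1), div_lt_iff₀ (log_pos ht1)] at ht
    exact ht.le
  have hexp : Tendsto (fun u => exp (lam * u)) atTop atTop :=
    tendsto_exp_atTop.comp (tendsto_id.const_mul_atTop hlam)
  filter_upwards [tendsto_exp_atTop.eventually hEc, hexp.eventually hEc,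
    eventually_gt_atTop 0] with u hu hlu hu0
  have hbound := abs_integral_div_mul_log_sq_le (E := E) (a := exp u) (b := exp (lam * u)) (c := c)
    (one_lt_exp_iff.2 hu0) (one_lt_exp_iff.2 (by positivity)) fun t ht => by
      rcases le_total (exp u) (exp (lam * u)) with h | h
      · exact hu t ((inf_eq_left.2 h).symm.trans_le ht.1)
      · exact hlu t ((inf_eq_right.2 h).symm.trans_le ht.1)
  rw [log_exp, log_exp, log_mul hlam.ne' hu0.ne', add_sub_cancel_right] at hbound
  rw [Real.dist_eq, sub_zero]
  calc _ ≤ c * |log lam| := hbound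
    _ < ε := by
      rw [div_mul_eq_mul_div, div_lt_iff₀ (by positivity)]
      nlinarith [abs_nonneg (log lam)]

theorem tendsto_exp_integral_div_exp_integral {E : ℝ → ℝ}
    (hE : Tendsto (fun t => E t / log t) atTop (𝓝 0))
    (hint : ∀ x, 2 ≤ x → IntervalIntegrable (fun t => E t / (t * log t ^ 2)) volume 2 x)
    {C : ℝ} (hC : C ≠ 0) {lam : ℝ} (hlam : 0 < lam) :
    Tendsto (fun u => C * exp (∫ t in (2 : ℝ)..exp (lam * u), E t / (t * log t ^ 2)) /
        (C * exp (∫ t in (2 : ℝ)..exp u, E t / (t * log t ^ 2)))) atTop (𝓝 1) := by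
  have h :=
    (continuous_exp.tendsto 0).comp (tendsto_integral_exp_exp_mul_of_tendsto_div_log hE hlam)
  rw [exp_zero] at h
  refine h.congr' ?_
  have hexp : Tendsto (fun u => exp (lam * u)) atTop atTop :=
    tendsto_exp_atTop.comp (tendsto_id.const_mul_atTop hlam)
  filter_upwards [tendsto_exp_atTop.eventually_ge_atTop 2, hexp.eventually_ge_atTop 2] with u hu hlu
  rw [Function.comp_apply, mul_div_mul_left _ _ hC, ← exp_sub,
    intervalIntegral.integral_interval_sub_left (hint _ hlu) (hint _ hu)]

theorem mertens_error_slowly_varying_general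
    (g : ℕ → ℝ) (θ : ℝ)
    (hlog : Tendsto (fun t : ℝ =>
        (∑ p ∈ Nat.primesBelow (⌊t⌋₊ + 1), g p * Real.log p / p) / Real.log t)
      atTop (nhds θ)) :
    Tendsto (fun t : ℝ => mertensError g θ t / Real.log t) atTop (nhds 0) ∧
    ∀ C : ℝ, 0 < C → ∀ lam : ℝ, 0 < lam →
      Tendsto (fun u : ℝ =>
          (C * Real.exp (∫ t in (2:ℝ)..(Real.exp (lam * u)),
              mertensError g θ t / (t * (Real.log t) ^ 2))) /
          (C * Real.exp (∫ t in (2:ℝ)..(Real.exp u),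
              mertensError g θ t / (t * (Real.log t) ^ 2))))
        atTop (nhds 1) :=
  ⟨tendsto_mertensError_div_log hlog, fun _ hC _ hlam =>
    tendsto_exp_integral_div_exp_integral (tendsto_mertensError_div_log hlog)
      (fun _ hx => intervalIntegrable_mertensError_div_mul_log_sq g θ le_rfl hx) hC.ne' hlam⟩

/-- **Slow variation of the Wirsing correction factor.** Let `g` be a nonnegative
multiplicative function with `∑_{p ≤ t} g(p) log p / p ∼ θ log t` for some `θ > 0` and
`∑_p (g(p)²/p² + ∑_{i ≥ 2} g(p^i)/p^i) < ∞`. Then `E(t) = ∑_{p≤t}(g(p)-θ) log p/p`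
satisfies `E(t) = o(log t)`, and `L(log x) = C exp(∫_2^x E(t)/(t log² t) dt)` is slowly
varying: `L(λ u)/L(u) → 1` as `u → ∞` for every `λ > 0`. -/
theorem mertens_error_slowly_varying
    (g : ℕ → ℝ) (θ : ℝ) (hθ : 0 < θ)
    (hg0 : ∀ n, 0 ≤ g n) (hg1 : g 1 = 1)
    (hgmult : ∀ m n : ℕ, Nat.Coprime m n → g (m * n) = g m * g n)
    (hlog : Tendsto (fun t : ℝ =>
        (∑ p ∈ Nat.primesBelow (⌊t⌋₊ + 1), g p * Real.log p / p) / Real.log t)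
      atTop (nhds θ))
    (hser : Summable fun p : {p : ℕ // p.Prime} =>
      g p ^ 2 / ((p : ℕ) : ℝ) ^ 2 +
        ∑' i : ℕ, g ((p : ℕ) ^ (i + 2)) / ((p : ℕ) : ℝ) ^ (i + 2)) :
    Tendsto (fun t : ℝ => mertensError g θ t / Real.log t) atTop (nhds 0) ∧
    ∀ C : ℝ, 0 < C → ∀ lam : ℝ, 0 < lam →
      Tendsto (fun u : ℝ =>
          (C * Real.exp (∫ t in (2:ℝ)..(Real.exp (lam * u)),
              mertensError g θ t / (t * (Real.log t) ^ 2))) /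
          (C * Real.exp (∫ t in (2:ℝ)..(Real.exp u),
              mertensError g θ t / (t * (Real.log t) ^ 2))))
        atTop (nhds 1) :=
  mertens_error_slowly_varying_general g θ hlog
end
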